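/- arXiv:1707.02811 — 2 statements merged into one kernel-verified Lean document; each statement's English description precedes it below -/
import Mathlib

section
/- Let Γ : ℝ³ → ℝ be defined by Γ(c1,c2,c3) = ((c1² + c2²)² + 16·c3²)^{−1/2} (the Folland–Kaplan–Korányi gauge raised to the power 2 − Q with homogeneous dimension Q = 4). Let the left-invariant vector fields of the Heisenberg group act on smooth functions g : ℝ³ → ℝ by (X₁g)(c) = ∂g/∂c1(c) + (c2/2)·∂g/∂c3(c) and (X₂g)(c) = ∂g/∂c2(c) − (c1/2)·∂g/∂c3(c). Then Γ is harmonic for the sub-Laplacian away from the origin: for every c ∈ ℝ³ with c ≠ (0,0,0), (X₁(X₁Γ))(c) + (X₂(X₂Γ))(c) = 0. -/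
/-- Partial derivative in the first coordinate. -/
noncomputable def pderiv1 (g : ℝ × ℝ × ℝ → ℝ) (c : ℝ × ℝ × ℝ) : ℝ :=
  deriv (fun t => g (t, c.2.1, c.2.2)) c.1

/-- Partial derivative in the second coordinate. -/
noncomputable def pderiv2 (g : ℝ × ℝ × ℝ → ℝ) (c : ℝ × ℝ × ℝ) : ℝ :=
  deriv (fun t => g (c.1, t, c.2.2)) c.2.1

/-- Partial derivative in the third coordinate. -/
noncomputable def pderiv3 (g : ℝ × ℝ × ℝ → ℝ) (c : ℝ × ℝ × ℝ) : ℝ :=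
  deriv (fun t => g (c.1, c.2.1, t)) c.2.2

/-- The left-invariant vector field `X₁ = ∂_{c1} + (c2/2)∂_{c3}` of the Heisenberg group. -/
noncomputable def heisX1 (g : ℝ × ℝ × ℝ → ℝ) (c : ℝ × ℝ × ℝ) : ℝ :=
  pderiv1 g c + (c.2.1 / 2) * pderiv3 g c

/-- The left-invariant vector field `X₂ = ∂_{c2} − (c1/2)∂_{c3}` of the Heisenberg group. -/
noncomputable def heisX2 (g : ℝ × ℝ × ℝ → ℝ) (c : ℝ × ℝ × ℝ) : ℝ :=
  pderiv2 g c - (c.1 / 2) * pderiv3 g c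

/-- The Folland–Kaplan–Korányi gauge raised to the power `2 − Q`, `Q = 4`:
`Γ(c1,c2,c3) = ((c1² + c2²)² + 16·c3²)^(−1/2)`. -/
noncomputable def heisGamma (c : ℝ × ℝ × ℝ) : ℝ :=
  ((c.1 ^ 2 + c.2.1 ^ 2) ^ 2 + 16 * c.2.2 ^ 2) ^ (-(1 : ℝ) / 2)

/-!
Write `Γ = N ^ (-1/2)` with `N = (c1² + c2²)² + 16 c3²`. Since `X₁` and `X₂` act as
derivations, `𝓛₀ (N ^ p) = p (p - 1) N ^ (p - 2) ((X₁N)² + (X₂N)²) + p N ^ (p - 1) 𝓛₀N`.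
A direct computation gives `(X₁N)² + (X₂N)² = 16 (c1² + c2²) N` and `𝓛₀N = 24 (c1² + c2²)`, hence
`𝓛₀ (N ^ p) = 8 p (2p + 1) (c1² + c2²) N ^ (p - 1)`, which vanishes at `p = -1/2`.
-/

open Filter Topology

section DerivAlong

variable {E : Type*} [NormedAddCommGroup E] [NormedSpace ℝ E]

noncomputable def derivAlong (v : E → E) (g : E → ℝ) (x : E) : ℝ :=
  fderiv ℝ g x (v x)

variable {v : E → E} {f g N : E → ℝ} {x : E}

theorem derivAlong_congr (h : f =ᶠ[𝓝 x] g) : derivAlong v f x = derivAlong v g x := by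
  simp only [derivAlong, h.fderiv_eq]

theorem derivAlong_mul (hf : DifferentiableAt ℝ f x) (hg : DifferentiableAt ℝ g x) :
    derivAlong v (fun y => f y * g y) x = derivAlong v f x * g x + f x * derivAlong v g x := by
  simp only [derivAlong, fderiv_fun_mul hf hg, add_apply, smul_apply, smul_eq_mul]
  ring

theorem derivAlong_comp {φ : ℝ → ℝ} {φ' : ℝ} (hφ : HasDerivAt φ φ' (N x))
    (hN : DifferentiableAt ℝ N x) :
    derivAlong v (fun y => φ (N y)) x = φ' * derivAlong v N x := by
  have h : HasFDerivAt (fun y => φ (N y)) (φ' • fderiv ℝ N x) x :=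
    hφ.comp_hasFDerivAt x hN.hasFDerivAt
  rw [derivAlong, h.fderiv, smul_apply, smul_eq_mul, derivAlong]

theorem apply_apply_comp_of_eq_derivAlong {X : (E → ℝ) → E → ℝ}
    (hX : ∀ g y, DifferentiableAt ℝ g y → X g y = derivAlong v g y)
    {φ φ' : ℝ → ℝ} {φ'' : ℝ} (hφ : ∀ᶠ t in 𝓝 (N x), HasDerivAt φ (φ' t) t)
    (hφ' : HasDerivAt φ' φ'' (N x)) (hN : ∀ᶠ y in 𝓝 x, DifferentiableAt ℝ N y)
    (hXN : DifferentiableAt ℝ (X N) x) :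
    X (X fun y => φ (N y)) x = φ'' * X N x ^ 2 + φ' (N x) * X (X N) x := by
  have hφN : ∀ᶠ y in 𝓝 x, HasDerivAt φ (φ' (N y)) (N y) :=
    hN.self_of_nhds.continuousAt.tendsto.eventually hφ
  have hXN_eq : X N =ᶠ[𝓝 x] derivAlong v N := hN.mono fun y hy => hX N y hy
  have hX_comp : X (fun y => φ (N y)) =ᶠ[𝓝 x] fun y => φ' (N y) * X N y := by
    filter_upwards [hφN, hN] with y hφy hNy
    rw [hX (fun y => φ (N y)) y (hφy.differentiableAt.comp y hNy), derivAlong_comp hφy hNy,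
      hX N y hNy]
  have hφ'N : DifferentiableAt ℝ (fun y => φ' (N y)) x :=
    hφ'.differentiableAt.comp x hN.self_of_nhds
  rw [hX _ x ((hφ'N.mul hXN).congr_of_eventuallyEq hX_comp), derivAlong_congr hX_comp,
    derivAlong_mul hφ'N hXN, derivAlong_comp hφ' hN.self_of_nhds, hX _ x hXN,
    derivAlong_congr hXN_eq, hX N x hN.self_of_nhds]
  ring

end DerivAlong

section Heisenberg

variable {g : ℝ × ℝ × ℝ → ℝ} {c : ℝ × ℝ × ℝ}

theorem pderiv1_eq_fderiv (hg : DifferentiableAt ℝ g c) :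
    pderiv1 g c = fderiv ℝ g c (1, 0, 0) := by
  obtain ⟨x, y, z⟩ := c
  have hline : HasDerivAt (fun t : ℝ => (t, y, z)) ((1, 0, 0) : ℝ × ℝ × ℝ) x :=
    (hasDerivAt_id x).prodMk ((hasDerivAt_const x y).prodMk (hasDerivAt_const x z))
  exact (hg.hasFDerivAt.comp_hasDerivAt x hline).deriv

theorem pderiv2_eq_fderiv (hg : DifferentiableAt ℝ g c) :
    pderiv2 g c = fderiv ℝ g c (0, 1, 0) := by
  obtain ⟨x, y, z⟩ := c
  have hline : HasDerivAt (fun t : ℝ => (x, t, z)) ((0, 1, 0) : ℝ × ℝ × ℝ) y :=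
    (hasDerivAt_const y x).prodMk ((hasDerivAt_id y).prodMk (hasDerivAt_const y z))
  exact (hg.hasFDerivAt.comp_hasDerivAt y hline).deriv

theorem pderiv3_eq_fderiv (hg : DifferentiableAt ℝ g c) :
    pderiv3 g c = fderiv ℝ g c (0, 0, 1) := by
  obtain ⟨x, y, z⟩ := c
  have hline : HasDerivAt (fun t : ℝ => (x, y, t)) ((0, 0, 1) : ℝ × ℝ × ℝ) z :=
    (hasDerivAt_const z x).prodMk ((hasDerivAt_const z y).prodMk (hasDerivAt_id z))
  exact (hg.hasFDerivAt.comp_hasDerivAt z hline).deriv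

theorem heisX1_eq_derivAlong (hg : DifferentiableAt ℝ g c) :
    heisX1 g c = derivAlong (fun c => (1, 0, c.2.1 / 2)) g c := by
  have hv : ((1, 0, c.2.1 / 2) : ℝ × ℝ × ℝ) = (1, 0, 0) + (c.2.1 / 2) • (0, 0, 1) := by
    ext <;> simp
  rw [heisX1, pderiv1_eq_fderiv hg, pderiv3_eq_fderiv hg, derivAlong, hv, map_add, map_smul,
    smul_eq_mul]

theorem heisX2_eq_derivAlong (hg : DifferentiableAt ℝ g c) :
    heisX2 g c = derivAlong (fun c => (0, 1, -(c.1 / 2))) g c := by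
  have hv : ((0, 1, -(c.1 / 2)) : ℝ × ℝ × ℝ) = (0, 1, 0) - (c.1 / 2) • (0, 0, 1) := by
    ext <;> simp
  rw [heisX2, pderiv2_eq_fderiv hg, pderiv3_eq_fderiv hg, derivAlong, hv, map_sub, map_smul,
    smul_eq_mul]

noncomputable def heisGaugeFourth (c : ℝ × ℝ × ℝ) : ℝ :=
  (c.1 ^ 2 + c.2.1 ^ 2) ^ 2 + 16 * c.2.2 ^ 2

theorem heisGaugeFourth_pos (hc : c ≠ (0, 0, 0)) : 0 < heisGaugeFourth c := by
  obtain ⟨x, y, z⟩ := c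
  have hxyz : x ≠ 0 ∨ y ≠ 0 ∨ z ≠ 0 := by
    contrapose! hc
    simp [hc.1, hc.2.1, hc.2.2]
  rcases hxyz with h | h | h <;> unfold heisGaugeFourth <;> positivity

theorem heisX1_heisGaugeFourth :
    heisX1 heisGaugeFourth = fun c => 4 * c.1 * (c.1 ^ 2 + c.2.1 ^ 2) + 16 * c.2.1 * c.2.2 := by
  ext c
  simp (disch := fun_prop) only [heisX1, pderiv1, pderiv3, heisGaugeFourth,
    deriv_fun_add, deriv_fun_mul, deriv_fun_pow, deriv_id'', deriv_const']
  ring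

theorem heisX2_heisGaugeFourth :
    heisX2 heisGaugeFourth = fun c => 4 * c.2.1 * (c.1 ^ 2 + c.2.1 ^ 2) - 16 * c.1 * c.2.2 := by
  ext c
  simp (disch := fun_prop) only [heisX2, pderiv2, pderiv3, heisGaugeFourth,
    deriv_fun_add, deriv_fun_mul, deriv_fun_pow, deriv_id'', deriv_const']
  ring

theorem heisX1_heisX1_heisGaugeFourth (c : ℝ × ℝ × ℝ) :
    heisX1 (heisX1 heisGaugeFourth) c = 12 * (c.1 ^ 2 + c.2.1 ^ 2) := by
  rw [heisX1_heisGaugeFourth]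
  simp (disch := fun_prop) only [heisX1, pderiv1, pderiv3, deriv_fun_add, deriv_fun_mul,
    deriv_fun_pow, deriv_id'', deriv_const', deriv_const_mul_id']
  ring

theorem heisX2_heisX2_heisGaugeFourth (c : ℝ × ℝ × ℝ) :
    heisX2 (heisX2 heisGaugeFourth) c = 12 * (c.1 ^ 2 + c.2.1 ^ 2) := by
  rw [heisX2_heisGaugeFourth]
  simp (disch := fun_prop) only [heisX2, pderiv2, pderiv3, deriv_fun_sub, deriv_fun_add,
    deriv_fun_mul, deriv_fun_pow, deriv_id'', deriv_const', deriv_const_mul_id']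
  ring

theorem heisX1_heisX1_add_heisX2_heisX2_rpow_heisGaugeFourth (p : ℝ) (hc : c ≠ (0, 0, 0)) :
    heisX1 (heisX1 fun c => heisGaugeFourth c ^ p) c +
        heisX2 (heisX2 fun c => heisGaugeFourth c ^ p) c =
      8 * p * (2 * p + 1) * (c.1 ^ 2 + c.2.1 ^ 2) * heisGaugeFourth c ^ (p - 1) := by
  have hN := heisGaugeFourth_pos hc
  have hφ : ∀ᶠ t in 𝓝 (heisGaugeFourth c),
      HasDerivAt (fun t => t ^ p) (p * t ^ (p - 1)) t :=
    (eventually_gt_nhds hN).mono fun t ht => Real.hasDerivAt_rpow_const (Or.inl ht.ne')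
  have hφ' : HasDerivAt (fun t => p * t ^ (p - 1))
      (p * ((p - 1) * heisGaugeFourth c ^ (p - 1 - 1))) (heisGaugeFourth c) :=
    (Real.hasDerivAt_rpow_const (Or.inl hN.ne')).const_mul p
  have hNdiff : ∀ᶠ y in 𝓝 c, DifferentiableAt ℝ heisGaugeFourth y :=
    Eventually.of_forall fun y => by unfold heisGaugeFourth; fun_prop
  rw [apply_apply_comp_of_eq_derivAlong (fun _ _ => heisX1_eq_derivAlong) hφ hφ' hNdiff
      (by rw [heisX1_heisGaugeFourth]; fun_prop),
    apply_apply_comp_of_eq_derivAlong (fun _ _ => heisX2_eq_derivAlong) hφ hφ' hNdiff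
      (by rw [heisX2_heisGaugeFourth]; fun_prop),
    heisX1_heisX1_heisGaugeFourth, heisX2_heisX2_heisGaugeFourth, heisX1_heisGaugeFourth,
    heisX2_heisGaugeFourth, Real.rpow_sub_one hN.ne' (p - 1)]
  field_simp
  simp only [heisGaugeFourth]
  ring

end Heisenberg

/-- `Γ` is harmonic for the Kohn sub-Laplacian `𝓛₀ = X₁² + X₂²` away from the origin. -/
theorem heisGamma_subLaplacian_harmonic :
    ∀ c : ℝ × ℝ × ℝ, c ≠ (0, 0, 0) →
      heisX1 (heisX1 heisGamma) c + heisX2 (heisX2 heisGamma) c = 0 := by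
  intro c hc
  exact (heisX1_heisX1_add_heisX2_heisX2_rpow_heisGaugeFourth (-(1 : ℝ) / 2) hc).trans
    (by norm_num)
end

section
/- Let (c4,c5,c6) ∈ ℝ³ with q = √(c4² + c5² + c6²) > 0, let Ω be the associated 3×3 skew-symmetric matrix, and let v ∈ ℝ³. Let M be the 4×4 matrix with upper-left 3×3 block Ω, upper-right 3×1 block v, and zero bottom row. Then exp(M) is the 4×4 matrix with upper-left block exp(Ω), upper-right block J·v, and bottom row (0,0,0,1), where J = I + ((1 − cos q)/q²)·Ω + ((q − sin q)/q³)·Ω². -/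
/-!
Write `M = [[Ω, v], [0, 0]]`. Then `M ^ (k + 1) = [[Ω ^ (k + 1), Ω ^ k v], [0, 0]]`, so summing the
exponential series blockwise gives `exp M = [[exp Ω, J' v], [0, 1]]` with `J' = ∑ Ω ^ k / (k + 1)!`.
Since `Ω ^ 3 = -q² Ω`, the odd and even powers of `Ω` are scalar multiples of `Ω` and `Ω ^ 2`, and
the two scalar series are tails of the cosine and sine series, summing to `(1 - cos q) / q²` and
`(q - sin q) / q³`; hence `J' = J`.
-/

open NormedSpace Matrix

/-- The skew-symmetric matrix `Ω(c4,c5,c6) = [[0,−c6,c5],[c6,0,−c4],[−c5,c4,0]]`. -/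
noncomputable def skewOmega (c4 c5 c6 : ℝ) : Matrix (Fin 3) (Fin 3) ℝ :=
  !![0, -c6, c5; c6, 0, -c4; -c5, c4, 0]

/-- The matrix `J = I + ((1 − cos q)/q²)·Ω + ((q − sin q)/q³)·Ω²` appearing in the
explicit exponential map of `SE(3)`. -/
noncomputable def se3J (c4 c5 c6 : ℝ) : Matrix (Fin 3) (Fin 3) ℝ :=
  1 + ((1 - Real.cos (Real.sqrt (c4 ^ 2 + c5 ^ 2 + c6 ^ 2))) /
        (Real.sqrt (c4 ^ 2 + c5 ^ 2 + c6 ^ 2)) ^ 2) • skewOmega c4 c5 c6 +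
    ((Real.sqrt (c4 ^ 2 + c5 ^ 2 + c6 ^ 2) - Real.sin (Real.sqrt (c4 ^ 2 + c5 ^ 2 + c6 ^ 2))) /
        (Real.sqrt (c4 ^ 2 + c5 ^ 2 + c6 ^ 2)) ^ 3) • (skewOmega c4 c5 c6) ^ 2

open scoped Nat

theorem HasSum.matrix_fromBlocks {X m n l o R : Type*} [AddCommMonoid R] [TopologicalSpace R]
    {f : X → Matrix n l R} {g : X → Matrix n o R} {h : X → Matrix m l R} {i : X → Matrix m o R}
    {a : Matrix n l R} {b : Matrix n o R} {c : Matrix m l R} {d : Matrix m o R}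
    (hf : HasSum f a) (hg : HasSum g b) (hh : HasSum h c) (hi : HasSum i d) :
    HasSum (fun x => fromBlocks (f x) (g x) (h x) (i x)) (fromBlocks a b c d) := by
  refine Pi.hasSum.mpr fun r => Pi.hasSum.mpr fun s => ?_
  rcases r with r | r <;> rcases s with s | s
  · exact Pi.hasSum.mp (Pi.hasSum.mp hf r) s
  · exact Pi.hasSum.mp (Pi.hasSum.mp hg r) s
  · exact Pi.hasSum.mp (Pi.hasSum.mp hh r) s
  · exact Pi.hasSum.mp (Pi.hasSum.mp hi r) s

namespace Matrix

variable {m n : Type*} [Fintype m] [DecidableEq m] [Fintype n] [DecidableEq n]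

theorem fromBlocks_zero_zero_pow_succ {R : Type*} [Semiring R] (A : Matrix m m R)
    (B : Matrix m n R) (k : ℕ) :
    fromBlocks A B (0 : Matrix n m R) (0 : Matrix n n R) ^ (k + 1) =
      fromBlocks (A ^ (k + 1)) (A ^ k * B) 0 0 := by
  induction k with
  | zero => simp
  | succ k ih =>
    rw [pow_succ, ih, fromBlocks_multiply]
    simp [pow_succ, Matrix.mul_assoc]

variable {𝕂 : Type*} [RCLike 𝕂]

-- `exp` only depends on the topology, so the operator norm may be used to get summability.
theorem hasSum_exp (A : Matrix m m 𝕂) : HasSum (fun k => (k ! : 𝕂)⁻¹ • A ^ k) (exp A) :=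
  open scoped Norms.Operator in exp_series_hasSum_exp' A

theorem exp_fromBlocks_zero_zero (A : Matrix m m 𝕂) (B : Matrix m n 𝕂) {J : Matrix m m 𝕂}
    (hJ : HasSum (fun k => ((k + 1)! : 𝕂)⁻¹ • A ^ k) J) :
    exp (fromBlocks A B 0 0) = fromBlocks (exp A) (J * B) 0 (1 : Matrix n n 𝕂) := by
  set M := fromBlocks A B 0 (0 : Matrix n n 𝕂)
  have hA : HasSum (fun k => ((k + 1)! : 𝕂)⁻¹ • A ^ (k + 1)) (exp A - 1) := by
    simpa using (hasSum_nat_add_iff' (f := fun k => (k ! : 𝕂)⁻¹ • A ^ k) 1).mpr (hasSum_exp A)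
  have hM : HasSum (fun k => ((k + 1)! : 𝕂)⁻¹ • M ^ (k + 1))
      (fromBlocks (exp A - 1) (J * B) 0 0) := by
    simp_rw [M, fromBlocks_zero_zero_pow_succ, fromBlocks_smul, smul_zero, ← Matrix.smul_mul]
    exact hA.matrix_fromBlocks (hJ.map (addMonoidHomMulRight B)
      (continuous_id.matrix_mul continuous_const)) hasSum_zero hasSum_zero
  rw [(hasSum_exp M).unique ((hasSum_nat_add_iff (f := fun k => (k ! : 𝕂)⁻¹ • M ^ k) 1).mp hM),
    Finset.sum_range_one, Nat.factorial_zero, Nat.cast_one, inv_one, pow_zero, one_smul,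
    ← fromBlocks_one, fromBlocks_add]
  simp only [sub_add_cancel, add_zero, zero_add]

end Matrix

section CubeRelation

variable {S M : Type*} [Monoid S] [Monoid M] [MulAction S M] [IsScalarTower S M M]
  {X : M} {c : S}

theorem pow_two_mul_add_one_of_pow_three_eq_smul (hX : X ^ 3 = c • X) (k : ℕ) :
    X ^ (2 * k + 1) = c ^ k • X := by
  induction k with
  | zero => simp
  | succ k ih =>
    rw [show 2 * (k + 1) + 1 = 3 + 2 * k by ring, pow_add, hX, smul_mul_assoc, ← pow_succ',
      ih, smul_smul, pow_succ']

theorem pow_two_mul_add_two_of_pow_three_eq_smul (hX : X ^ 3 = c • X) (k : ℕ) :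
    X ^ (2 * k + 2) = c ^ k • X ^ 2 := by
  rw [pow_succ, pow_two_mul_add_one_of_pow_three_eq_smul hX, smul_mul_assoc, ← pow_two]

end CubeRelation

namespace Real

theorem hasSum_one_sub_cos_div_sq {q : ℝ} (hq : q ≠ 0) :
    HasSum (fun k : ℕ => ((2 * k + 2)! : ℝ)⁻¹ * (-q ^ 2) ^ k) ((1 - cos q) / q ^ 2) := by
  have h := ((hasSum_nat_add_iff' 1).mpr (hasSum_cos q)).neg.div_const (q ^ 2)
  simp only [Finset.sum_range_one, neg_sub, mul_zero, pow_zero, Nat.factorial_zero,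
    Nat.cast_one, div_one, one_mul] at h
  refine h.congr_fun fun k => ?_
  rw [neg_pow, pow_mul, mul_add_one, pow_succ, pow_succ]
  field_simp
  ring

theorem hasSum_sub_sin_div_cube {q : ℝ} (hq : q ≠ 0) :
    HasSum (fun k : ℕ => ((2 * k + 3)! : ℝ)⁻¹ * (-q ^ 2) ^ k) ((q - sin q) / q ^ 3) := by
  have h := ((hasSum_nat_add_iff' 1).mpr (hasSum_sin q)).neg.div_const (q ^ 3)
  simp only [Finset.sum_range_one, neg_sub, mul_zero, zero_add, pow_zero, pow_one,
    Nat.factorial_one, Nat.cast_one, div_one, one_mul] at h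
  refine h.congr_fun fun k => ?_
  rw [neg_pow, ← pow_mul, show 2 * (k + 1) + 1 = 2 * k + 3 by ring, pow_add, pow_succ]
  field_simp
  ring

end Real

open Real in
theorem hasSum_inv_factorial_succ_smul_pow_of_pow_three {R : Type*} [Ring R] [Algebra ℝ R]
    [TopologicalSpace R] [IsTopologicalAddGroup R] [ContinuousSMul ℝ R] {X : R} {q : ℝ}
    (hq : q ≠ 0) (hX : X ^ 3 = (-q ^ 2) • X) :
    HasSum (fun k => ((k + 1)! : ℝ)⁻¹ • X ^ k)
      (1 + ((1 - cos q) / q ^ 2) • X + ((q - sin q) / q ^ 3) • X ^ 2) := by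
  have hodd : HasSum (fun k => ((2 * k + 2)! : ℝ)⁻¹ • X ^ (2 * k + 1))
      (((1 - cos q) / q ^ 2) • X) :=
    ((hasSum_one_sub_cos_div_sq hq).smul_const X).congr_fun fun k => by
      rw [pow_two_mul_add_one_of_pow_three_eq_smul hX, smul_smul]
  have heven : HasSum (fun k => ((2 * k + 3)! : ℝ)⁻¹ • X ^ (2 * k + 2))
      (((q - sin q) / q ^ 3) • X ^ 2) :=
    ((hasSum_sub_sin_div_cube hq).smul_const (X ^ 2)).congr_fun fun k => by
      rw [pow_two_mul_add_two_of_pow_three_eq_smul hX, smul_smul]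
  have h := (hasSum_nat_add_iff (f := fun k => ((k + 1)! : ℝ)⁻¹ • X ^ k) 1).mp
    (HasSum.even_add_odd (f := fun k => ((k + 1 + 1)! : ℝ)⁻¹ • X ^ (k + 1)) hodd heven)
  rwa [Finset.sum_range_one, zero_add, Nat.factorial_one, Nat.cast_one, inv_one, pow_zero, one_smul,
    add_comm, ← add_assoc] at h

theorem skewOmega_pow_three (c4 c5 c6 : ℝ) :
    skewOmega c4 c5 c6 ^ 3 = (-(c4 ^ 2 + c5 ^ 2 + c6 ^ 2)) • skewOmega c4 c5 c6 := by
  ext i j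
  fin_cases i <;> fin_cases j <;>
    simp [skewOmega, pow_succ, Matrix.mul_apply, Fin.sum_univ_three] <;> ring

/-- The explicit exponential map `Exp : se(3) → SE(3)`: for `q = √(c4²+c5²+c6²) > 0`,
`v ∈ ℝ³`, and `M` the 4×4 matrix with upper-left block `Ω`, upper-right block `v` and
zero bottom row, `exp(M)` has upper-left block `exp(Ω)`, upper-right block `J·v` and
bottom row `(0,0,0,1)`. -/
theorem se3_exp_block_formula (c4 c5 c6 : ℝ)
    (hq : 0 < Real.sqrt (c4 ^ 2 + c5 ^ 2 + c6 ^ 2)) (v : Fin 3 → ℝ) :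
    NormedSpace.exp (fromBlocks (skewOmega c4 c5 c6) (replicateCol (Fin 1) v) (0 : Matrix (Fin 1) (Fin 3) ℝ) (0 : Matrix (Fin 1) (Fin 1) ℝ)) =
      fromBlocks (NormedSpace.exp (skewOmega c4 c5 c6))
        (replicateCol (Fin 1) ((se3J c4 c5 c6).mulVec v)) (0 : Matrix (Fin 1) (Fin 3) ℝ) (1 : Matrix (Fin 1) (Fin 1) ℝ) := by
  have hΩ : skewOmega c4 c5 c6 ^ 3 =
      (-Real.sqrt (c4 ^ 2 + c5 ^ 2 + c6 ^ 2) ^ 2) • skewOmega c4 c5 c6 := by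
    rw [Real.sq_sqrt (by positivity)]
    exact skewOmega_pow_three c4 c5 c6
  have hJ := hasSum_inv_factorial_succ_smul_pow_of_pow_three hq.ne' hΩ
  rw [exp_fromBlocks_zero_zero _ _ hJ, replicateCol_mulVec, se3J]
end
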